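/- Let γ : I → H3 be a unit-speed non-geodesic curve whose Frenet binormal component B₃ = g(B,e3) vanishes identically. Then the geodesic torsion satisfies τ² = 1/4, and γ is not biharmonic. -/

import Mathlib

noncomputable section

/-- Points of the Heisenberg group `H₃ = ℝ³`. -/
abbrev R3 := ℝ × ℝ × ℝ

/-- The left-invariant frame field `e₁ = ∂x - (y/2)∂z`. -/
def e1 : R3 → R3 := fun p => (1, 0, -p.2.1 / 2)
/-- The left-invariant frame field `e₂ = ∂y + (x/2)∂z`. -/
def e2 : R3 → R3 := fun p => (0, 1, p.1 / 2)
/-- The left-invariant frame field `e₃ = ∂z`. -/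
def e3 : R3 → R3 := fun _ => (0, 0, 1)

/-- The Heisenberg metric `g = dx² + dy² + (dz + (y/2)dx - (x/2)dy)²`. -/
def gm (p v w : R3) : ℝ :=
  v.1 * w.1 + v.2.1 * w.2.1 +
    (v.2.2 + p.2.1 / 2 * v.1 - p.1 / 2 * v.2.1) *
      (w.2.2 + p.2.1 / 2 * w.1 - p.1 / 2 * w.2.1)

/-- Lie bracket of vector fields on `ℝ³` (in coordinate components). -/
def bracket (X Y : R3 → R3) : R3 → R3 :=
  fun p => fderiv ℝ Y p (X p) - fderiv ℝ X p (Y p)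

/-- Directional derivative of a scalar function along a vector field. -/
def dd (X : R3 → R3) (f : R3 → ℝ) : R3 → ℝ := fun p => fderiv ℝ f p (X p)

/-- The Koszul expression `g(∇_X Y, Z)` characterizing the Levi-Civita connection. -/
def koszul (X Y Z : R3 → R3) : R3 → ℝ := fun p =>
  (dd X (fun q => gm q (Y q) (Z q)) p + dd Y (fun q => gm q (X q) (Z q)) p
    - dd Z (fun q => gm q (X q) (Y q)) p
    + gm p (bracket X Y p) (Z p) - gm p (bracket X Z p) (Y p)
    - gm p (bracket Y Z p) (X p)) / 2

/-- The Levi-Civita connection of the Heisenberg metric, recovered from the Koszul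
formula via the orthonormal frame `e₁, e₂, e₃`. -/
def nabla (X Y : R3 → R3) : R3 → R3 := fun p =>
  koszul X Y e1 p • e1 p + koszul X Y e2 p • e2 p + koszul X Y e3 p • e3 p

/-- Curvature operator `R(X,Y)Z = -∇_X∇_Y Z + ∇_Y∇_X Z + ∇_{[X,Y]}Z`. -/
def Rc (X Y Z : R3 → R3) : R3 → R3 := fun p =>
  -nabla X (nabla Y Z) p + nabla Y (nabla X Z) p + nabla (bracket X Y) Z p

/-- Riemann-Christoffel tensor `R(X,Y,Z,W) = g(R(X,Y)Z, W)`. -/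
def R4 (X Y Z W : R3 → R3) : R3 → ℝ := fun p => gm p (Rc X Y Z p) (W p)

/-- Ricci tensor `ρ(X,Y) = trace (Z ↦ R(X,Z)Y)`, computed in the orthonormal frame. -/
def ricci (X Y : R3 → R3) : R3 → ℝ := fun p =>
  gm p (Rc X e1 Y p) (e1 p) + gm p (Rc X e2 Y p) (e2 p) + gm p (Rc X e3 Y p) (e3 p)

/-- Components of a (coordinate) tangent vector `v` at `p` with respect to the
orthonormal frame `e₁, e₂, e₃`. -/
def fc (p v : R3) : R3 := (v.1, v.2.1, v.2.2 + p.2.1 / 2 * v.1 - p.1 / 2 * v.2.1)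

/-- Frame components of the velocity field of a curve `γ`. -/
def tv (γ : ℝ → R3) (s : ℝ) : R3 := fc (γ s) (deriv γ s)

/-- Inner product of frame components (the frame is `g`-orthonormal). -/
def dot (v w : R3) : ℝ := v.1 * w.1 + v.2.1 * w.2.1 + v.2.2 * w.2.2

/-- Cross product of frame components (the frame is orthonormal and positively oriented). -/
def cross (v w : R3) : R3 :=
  (v.2.1 * w.2.2 - v.2.2 * w.2.1, v.2.2 * w.1 - v.1 * w.2.2, v.1 * w.2.1 - v.2.1 * w.1)

/-- Covariant derivative `∇_{γ'} V` along a curve `γ` of a vector field `V` given by its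
frame components, expressed again in frame components, using the connection coefficients
of the Levi-Civita connection of the Heisenberg metric in the frame `e₁, e₂, e₃`. -/
def covD (γ : ℝ → R3) (V : ℝ → R3) : ℝ → R3 := fun s =>
  let t := tv γ s
  (deriv (fun u => (V u).1) s + (V s).2.1 * t.2.2 / 2 + (V s).2.2 * t.2.1 / 2,
   deriv (fun u => (V u).2.1) s - (V s).1 * t.2.2 / 2 - (V s).2.2 * t.1 / 2,
   deriv (fun u => (V u).2.2) s - (V s).1 * t.2.1 / 2 + (V s).2.1 * t.1 / 2)

/-- The left-invariant vector field with constant frame components `v`. -/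
def ext (v : R3) : R3 → R3 := fun p => v.1 • e1 p + v.2.1 • e2 p + v.2.2 • e3 p

/-- Pointwise curvature operator on frame components: `R` is tensorial, so its value on
vectors at `p` (given in frame components) is computed via left-invariant extensions. -/
def Rfr (p : R3) (x y z : R3) : R3 := fc p (Rc (ext x) (ext y) (ext z) p)

/-- Bitension field `τ₂(γ) = ∇_T³ T + R(T, ∇_T T) T` of a unit-speed curve, where `T`
is the unit tangent in frame components. -/
def bitension (γ T : ℝ → R3) (s : ℝ) : R3 :=
  covD γ (covD γ (covD γ T)) s + Rfr (γ s) (T s) (covD γ T s) (T s)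

/-- A curve is biharmonic iff its bitension field vanishes. -/
def Biharmonic (γ T : ℝ → R3) : Prop := ∀ s, bitension γ T s = 0

/-- Frenet data of a unit-speed curve in `H₃`: `T, N, B` are the frame components of the
Frenet frame, `k > 0` is the geodesic curvature and `τ` the geodesic torsion, satisfying
the Frenet equations `∇_T T = kN`, `∇_T N = -kT - τB`, `∇_T B = τN`, with `B = T × N`. -/
structure Frenet (γ T N B : ℝ → R3) (k τ : ℝ → ℝ) : Prop where
  smooth_γ : ContDiff ℝ (⊤ : ℕ∞) γ
  smooth_T : ContDiff ℝ (⊤ : ℕ∞) T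
  smooth_N : ContDiff ℝ (⊤ : ℕ∞) N
  smooth_B : ContDiff ℝ (⊤ : ℕ∞) B
  smooth_k : ContDiff ℝ (⊤ : ℕ∞) k
  smooth_τ : ContDiff ℝ (⊤ : ℕ∞) τ
  tangent : ∀ s, T s = tv γ s
  unit : ∀ s, dot (T s) (T s) = 1
  normal_unit : ∀ s, dot (N s) (N s) = 1
  fr1 : ∀ s, covD γ T s = k s • N s
  fr2 : ∀ s, covD γ N s = -(k s • T s) - τ s • B s
  fr3 : ∀ s, covD γ B s = τ s • N s
  binormal : ∀ s, B s = cross (T s) (N s)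


section Curv

/-- The frame fields as left-invariant extensions. -/
lemma e1_eq_ext : e1 = ext (1,0,0) := by
  funext p
  simp [e1, ext, e2, e3, Prod.ext_iff]

lemma e2_eq_ext : e2 = ext (0,1,0) := by
  funext p
  simp [e1, ext, e2, e3, Prod.ext_iff]

lemma e3_eq_ext : e3 = ext (0,0,1) := by
  funext p
  simp [e1, ext, e2, e3, Prod.ext_iff]

lemma gm_ext (p v w : R3) : gm p (ext v p) (ext w p) = dot v w := by
  simp only [gm, ext, dot, e1, e2, e3, Prod.fst_add, Prod.snd_add, Prod.smul_fst,
    Prod.smul_snd, smul_eq_mul]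
  ring

/-- derivative of `ext w`. -/
def extD (w : R3) : R3 →L[ℝ] R3 :=
  (0 : R3 →L[ℝ] ℝ).prod ((0 : R3 →L[ℝ] ℝ).prod
    ((w.2.1/2) • (ContinuousLinearMap.fst ℝ ℝ (ℝ × ℝ)) -
     (w.1/2) • ((ContinuousLinearMap.fst ℝ ℝ ℝ).comp (ContinuousLinearMap.snd ℝ ℝ (ℝ × ℝ)))))

lemma extD_apply (w q : R3) : extD w q = (0, 0, w.2.1/2 * q.1 - w.1/2 * q.2.1) := by
  simp only [extD, ContinuousLinearMap.prod_apply, ContinuousLinearMap.sub_apply,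
    ContinuousLinearMap.smul_apply, ContinuousLinearMap.coe_fst', ContinuousLinearMap.coe_comp',
    Function.comp_apply, ContinuousLinearMap.coe_snd', ContinuousLinearMap.zero_apply,
    smul_eq_mul, Prod.mk.injEq]

lemma ext_hasFDeriv (w p : R3) : HasFDerivAt (ext w) (extD w) p := by
  have h : ext w = fun q => (w.1, w.2.1, w.2.2) + extD w q := by
    funext q
    simp only [ext, extD_apply, e1, e2, e3, Prod.smul_mk, smul_eq_mul, Prod.mk_add_mk,
      Prod.mk.injEq]
    refine ⟨by ring, by ring, by ring⟩
  rw [h]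
  exact ((hasFDerivAt_const (w.1, w.2.1, w.2.2) p).add (extD w).hasFDerivAt).congr_fderiv (zero_add _)

lemma fderiv_ext (w p : R3) : fderiv ℝ (ext w) p = extD w :=
  (ext_hasFDeriv w p).fderiv

lemma bracket_ext (v w : R3) :
    bracket (ext v) (ext w) = ext (0, 0, v.1 * w.2.1 - v.2.1 * w.1) := by
  funext p
  simp only [bracket, fderiv_ext, extD_apply, ext, e1, e2, e3]
  simp [Prod.ext_iff]
  ring

lemma dd_gm_ext (X : R3 → R3) (v w : R3) (p : R3) :
    dd X (fun q => gm q (ext v q) (ext w q)) p = 0 := by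
  have h : (fun q => gm q (ext v q) (ext w q)) = fun _ => dot v w := by
    funext q; exact gm_ext q v w
  simp [dd, h]

end Curv


section Curv2

lemma koszul_ext (v w u : R3) (p : R3) :
    koszul (ext v) (ext w) (ext u) p =
      ((v.1*w.2.1 - v.2.1*w.1)*u.2.2 - (v.1*u.2.1 - v.2.1*u.1)*w.2.2
        - (w.1*u.2.1 - w.2.1*u.1)*v.2.2) / 2 := by
  simp only [koszul, dd_gm_ext, bracket_ext]
  simp only [ext, gm, e1, e2, e3, Prod.smul_mk, smul_eq_mul, Prod.mk_add_mk]
  ring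

/-- connection coefficients in the frame -/
def Nb (v w : R3) : R3 :=
  ((v.2.1*w.2.2 + v.2.2*w.2.1)/2, -(v.1*w.2.2 + v.2.2*w.1)/2, (v.1*w.2.1 - v.2.1*w.1)/2)

lemma nabla_ext (v w : R3) : nabla (ext v) (ext w) = ext (Nb v w) := by
  funext p
  simp only [nabla, e1_eq_ext, e2_eq_ext, e3_eq_ext, koszul_ext]
  simp only [ext, e1, e2, e3, Nb, Prod.smul_mk, smul_eq_mul, Prod.mk_add_mk, Prod.mk.injEq]
  refine ⟨by ring, by ring, by ring⟩

lemma Rfr_formula (p x y z : R3) :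
    Rfr p x y z = -Nb x (Nb y z) + Nb y (Nb x z) + Nb (0, 0, x.1*y.2.1 - x.2.1*y.1) z := by
  simp only [Rfr, Rc, nabla_ext, bracket_ext]
  simp only [fc, ext, e1, e2, e3, Nb, Prod.smul_mk, smul_eq_mul, Prod.mk_add_mk,
    Prod.neg_mk, Prod.mk.injEq, Prod.fst_add, Prod.snd_add, Prod.fst_neg, Prod.snd_neg]
  refine ⟨by ring, by ring, by ring⟩

end Curv2

lemma Rfr_TNT (p x y : R3) (h1 : dot x x = 1) (h2 : dot x y = 0)
    (h3 : x.1 * y.2.1 - x.2.1 * y.1 = 0) :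
    Rfr p x y x = (4⁻¹ : ℝ) • y := by
  obtain ⟨x1, x2, x3⟩ := x
  obtain ⟨y1, y2, y3⟩ := y
  simp only [dot] at h1 h2
  simp only at h3
  rw [Rfr_formula]
  simp only [Nb, Prod.smul_mk, smul_eq_mul, Prod.mk_add_mk, Prod.neg_mk, Prod.mk.injEq]
  refine ⟨?_, ?_, ?_⟩
  · linear_combination x2 * h3 + (-x1/4) * h2 + (y1/4) * h1
  · linear_combination (-x1) * h3 + (-x2/4) * h2 + (y2/4) * h1
  · linear_combination (-x3/4) * h2 + (y3/4) * h1

section Curve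

lemma covD_eq (γ V : ℝ → R3) (s : ℝ) (X : R3) (h : covD γ V s = X) :
    deriv (fun u => (V u).1) s
        = X.1 - (V s).2.1 * (tv γ s).2.2 / 2 - (V s).2.2 * (tv γ s).2.1 / 2 ∧
    deriv (fun u => (V u).2.1) s
        = X.2.1 + (V s).1 * (tv γ s).2.2 / 2 + (V s).2.2 * (tv γ s).1 / 2 ∧
    deriv (fun u => (V u).2.2) s
        = X.2.2 + (V s).1 * (tv γ s).2.1 / 2 - (V s).2.1 * (tv γ s).1 / 2 := by
  simp only [covD] at h
  rw [Prod.ext_iff, Prod.ext_iff] at h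
  obtain ⟨h1, h2, h3⟩ := h
  refine ⟨by linarith, by linarith, by linarith⟩

end Curve

section Comb

variable {γ T N B : ℝ → R3} {k τ : ℝ → ℝ}

lemma covD_comb (hF : Frenet γ T N B k τ) (a b c : ℝ → ℝ)
    (ha : Differentiable ℝ a) (hb : Differentiable ℝ b) (hc : Differentiable ℝ c) (s : ℝ) :
    covD γ (fun u => a u • T u + b u • N u + c u • B u) s =
      (deriv a s - b s * k s) • T s + (deriv b s + a s * k s + c s * τ s) • N s
        + (deriv c s - b s * τ s) • B s := by
  have dT := hF.smooth_T.differentiable (by simp)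
  have dN := hF.smooth_N.differentiable (by simp)
  have dB := hF.smooth_B.differentiable (by simp)
  obtain ⟨f1, f2, f3⟩ := covD_eq γ T s _ (hF.fr1 s)
  obtain ⟨g1, g2, g3⟩ := covD_eq γ N s _ (hF.fr2 s)
  obtain ⟨e1, e2, e3⟩ := covD_eq γ B s _ (hF.fr3 s)
  rw [← hF.tangent s] at f1 f2 f3 g1 g2 g3 e1 e2 e3
  have hV1 : (fun u => ((a u • T u + b u • N u + c u • B u) : R3).1)
      = fun u => a u * (T u).1 + b u * (N u).1 + c u * (B u).1 := by
    funext u; simp [Prod.fst_add]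
  have hV2 : (fun u => ((a u • T u + b u • N u + c u • B u) : R3).2.1)
      = fun u => a u * (T u).2.1 + b u * (N u).2.1 + c u * (B u).2.1 := by
    funext u; simp [Prod.snd_add]
  have hV3 : (fun u => ((a u • T u + b u • N u + c u • B u) : R3).2.2)
      = fun u => a u * (T u).2.2 + b u * (N u).2.2 + c u * (B u).2.2 := by
    funext u; simp [Prod.snd_add]
  have D1 : deriv (fun u => a u * (T u).1 + b u * (N u).1 + c u * (B u).1) s
      = deriv a s * (T s).1 + a s * deriv (fun u => (T u).1) s
        + (deriv b s * (N s).1 + b s * deriv (fun u => (N u).1) s)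
        + (deriv c s * (B s).1 + c s * deriv (fun u => (B u).1) s) := by
    exact ((((ha s).hasDerivAt.mul (dT.fst s).hasDerivAt).add
      ((hb s).hasDerivAt.mul (dN.fst s).hasDerivAt)).add
      ((hc s).hasDerivAt.mul (dB.fst s).hasDerivAt)).deriv
  have D2 : deriv (fun u => a u * (T u).2.1 + b u * (N u).2.1 + c u * (B u).2.1) s
      = deriv a s * (T s).2.1 + a s * deriv (fun u => (T u).2.1) s
        + (deriv b s * (N s).2.1 + b s * deriv (fun u => (N u).2.1) s)
        + (deriv c s * (B s).2.1 + c s * deriv (fun u => (B u).2.1) s) := by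
    exact ((((ha s).hasDerivAt.mul (dT.snd.fst s).hasDerivAt).add
      ((hb s).hasDerivAt.mul (dN.snd.fst s).hasDerivAt)).add
      ((hc s).hasDerivAt.mul (dB.snd.fst s).hasDerivAt)).deriv
  have D3 : deriv (fun u => a u * (T u).2.2 + b u * (N u).2.2 + c u * (B u).2.2) s
      = deriv a s * (T s).2.2 + a s * deriv (fun u => (T u).2.2) s
        + (deriv b s * (N s).2.2 + b s * deriv (fun u => (N u).2.2) s)
        + (deriv c s * (B s).2.2 + c s * deriv (fun u => (B u).2.2) s) := by
    exact ((((ha s).hasDerivAt.mul (dT.snd.snd s).hasDerivAt).add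
      ((hb s).hasDerivAt.mul (dN.snd.snd s).hasDerivAt)).add
      ((hc s).hasDerivAt.mul (dB.snd.snd s).hasDerivAt)).deriv
  simp only [covD, ← hF.tangent s, hV1, hV2, hV3, D1, D2, D3]
  simp only [Prod.smul_fst, Prod.smul_snd, Prod.fst_add, Prod.snd_add, smul_eq_mul,
    Prod.fst_neg, Prod.snd_neg, smul_neg, neg_smul, Prod.fst_sub, Prod.snd_sub] at f1 f2 f3 g1 g2 g3 e1 e2 e3 ⊢
  rw [Prod.ext_iff, Prod.ext_iff]
  simp only [Prod.smul_fst, Prod.smul_snd, Prod.fst_add, Prod.snd_add, smul_eq_mul]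
  refine ⟨?_, ?_, ?_⟩
  · linear_combination a s * f1 + b s * g1 + c s * e1
  · linear_combination a s * f2 + b s * g2 + c s * e2
  · linear_combination a s * f3 + b s * g3 + c s * e3

end Comb

section Main

variable {γ T N B : ℝ → R3} {k τ : ℝ → ℝ}

lemma dotTN_zero (hF : Frenet γ T N B k τ) (hk : ∀ s, 0 < k s) (s : ℝ) :
    dot (T s) (N s) = 0 := by
  have dT := hF.smooth_T.differentiable (by simp)
  obtain ⟨f1, f2, f3⟩ := covD_eq γ T s _ (hF.fr1 s)
  rw [← hF.tangent s] at f1 f2 f3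
  have hfconst : (fun u => (T u).1 * (T u).1 + (T u).2.1 * (T u).2.1 + (T u).2.2 * (T u).2.2)
      = fun _ => (1 : ℝ) := by
    funext u
    simpa [dot] using hF.unit u
  have H : HasDerivAt
      (fun u => (T u).1 * (T u).1 + (T u).2.1 * (T u).2.1 + (T u).2.2 * (T u).2.2)
      (deriv (fun u => (T u).1) s * (T s).1 + (T s).1 * deriv (fun u => (T u).1) s
        + (deriv (fun u => (T u).2.1) s * (T s).2.1 + (T s).2.1 * deriv (fun u => (T u).2.1) s)
        + (deriv (fun u => (T u).2.2) s * (T s).2.2 + (T s).2.2 * deriv (fun u => (T u).2.2) s))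
      s := by
    exact (((dT.fst s).hasDerivAt.mul (dT.fst s).hasDerivAt).add
      ((dT.snd.fst s).hasDerivAt.mul (dT.snd.fst s).hasDerivAt)).add
      ((dT.snd.snd s).hasDerivAt.mul (dT.snd.snd s).hasDerivAt)
  rw [hfconst] at H
  have h0 := H.unique (hasDerivAt_const s 1)
  have hkd : k s * dot (T s) (N s) = 0 := by
    simp only [dot, Prod.smul_fst, Prod.smul_snd, smul_eq_mul] at f1 f2 f3 ⊢
    linear_combination h0 / 2 - (T s).1 * f1 - (T s).2.1 * f2 - (T s).2.2 * f3
  exact (mul_eq_zero.mp hkd).resolve_left (ne_of_gt (hk s))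

lemma cross3_zero (hF : Frenet γ T N B k τ) (hB3 : ∀ s, (B s).2.2 = 0) (s : ℝ) :
    (T s).1 * (N s).2.1 - (T s).2.1 * (N s).1 = 0 := by
  have := hB3 s
  rw [hF.binormal s] at this
  simpa [cross] using this

lemma dotBB_one (hF : Frenet γ T N B k τ) (hk : ∀ s, 0 < k s) (s : ℝ) :
    dot (B s) (B s) = 1 := by
  have hTN := dotTN_zero hF hk s
  have hu := hF.unit s
  have hn := hF.normal_unit s
  rw [hF.binormal s]
  simp only [dot, cross] at hTN hu hn ⊢
  nlinarith [hTN, hu, hn]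

lemma tau_eq (hF : Frenet γ T N B k τ) (hk : ∀ s, 0 < k s)
    (hB3 : ∀ s, (B s).2.2 = 0) (s : ℝ) : τ s = -(1/2) := by
  have dN := hF.smooth_N.differentiable (by simp)
  -- the pointwise identity N₃ (2τ+1) = 0
  have hτN : ∀ u, (N u).2.2 * (2 * τ u + 1) = 0 := by
    intro u
    obtain ⟨_, _, e3'⟩ := covD_eq γ B u _ (hF.fr3 u)
    rw [← hF.tangent u] at e3'
    have hz : (fun v => (B v).2.2) = fun _ => (0 : ℝ) := funext hB3
    rw [hz, deriv_const] at e3'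
    rw [hF.binormal u] at e3'
    have hTN := dotTN_zero hF hk u
    have hu := hF.unit u
    simp only [cross, dot, Prod.smul_fst, Prod.smul_snd, smul_eq_mul] at e3' hTN hu ⊢
    linear_combination -2 * e3' - (N u).2.2 * hu + (T u).2.2 * hTN
  by_cases hz : (N s).2.2 = 0
  · -- N₃ vanishes at s; use that its derivative -k T₃ is nonzero there
    have hT3 : (T s).2.2 ≠ 0 := by
      intro hT0
      have hBB := dotBB_one hF hk s
      have hb := hF.binormal s
      rw [hb] at hBB
      simp only [dot, cross, hz, hT0] at hBB
      have := hB3 s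
      rw [hb] at this
      simp only [cross] at this
      nlinarith [hBB, this]
    -- derivative of N₃ at s
    have hder : HasDerivAt (fun u => (N u).2.2) (-(k s * (T s).2.2)) s := by
      obtain ⟨_, _, g3⟩ := covD_eq γ N s _ (hF.fr2 s)
      rw [← hF.tangent s] at g3
      have hc := cross3_zero hF hB3 s
      have hB3s := hB3 s
      have hval : deriv (fun u => (N u).2.2) s = -(k s * (T s).2.2) := by
        simp only [Prod.fst_sub, Prod.snd_sub, Prod.fst_neg, Prod.snd_neg, Prod.smul_fst,
          Prod.smul_snd, smul_eq_mul] at g3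
        rw [g3, hB3s]
        linear_combination -hc / 2
      exact hval ▸ (dN.snd.snd s).hasDerivAt
    have hne : -(k s * (T s).2.2) ≠ 0 := by
      simp only [ne_eq, neg_eq_zero, mul_eq_zero, not_or]
      exact ⟨ne_of_gt (hk s), hT3⟩
    -- eventually N₃ ≠ 0 near s (punctured), hence τ = -1/2 near s, conclude by continuity
    have hslope := hasDerivAt_iff_tendsto_slope.mp hder
    have hev : ∀ᶠ u in nhdsWithin s {s}ᶜ, slope (fun u => (N u).2.2) s u ≠ 0 :=
      hslope.eventually_ne hne
    have hevN : ∀ᶠ u in nhdsWithin s {s}ᶜ, (N u).2.2 ≠ 0 := by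
      filter_upwards [hev, self_mem_nhdsWithin] with u hu hu'
      intro h0
      apply hu
      simp [slope, h0, hz]
    have hevτ : ∀ᶠ u in nhdsWithin s {s}ᶜ, τ u = -(1/2) := by
      filter_upwards [hevN] with u hu
      have := hτN u
      have h2 : 2 * τ u + 1 = 0 := by
        rcases mul_eq_zero.mp this with h | h
        · exact absurd h hu
        · exact h
      linarith
    have hcont : Filter.Tendsto τ (nhdsWithin s {s}ᶜ) (nhds (τ s)) :=
      ((hF.smooth_τ.continuous.tendsto s).mono_left nhdsWithin_le_nhds)
    have hconst : Filter.Tendsto τ (nhdsWithin s {s}ᶜ) (nhds (-(1/2))) := by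
      refine Filter.Tendsto.congr' ?_ tendsto_const_nhds
      filter_upwards [hevτ] with u hu using hu.symm
    exact tendsto_nhds_unique hcont hconst
  · have := hτN s
    have h2 : 2 * τ s + 1 = 0 := by
      rcases mul_eq_zero.mp this with h | h
      · exact absurd h hz
      · exact h
    linarith

end Main


/-- If `γ` is a non-geodesic unit-speed curve in `H₃` with `B₃ ≡ 0`, then `τ² = 1/4`
and `γ` is not biharmonic. -/
theorem not_biharmonic_of_B3_zero (γ T N B : ℝ → R3) (k τ : ℝ → ℝ)
    (hF : Frenet γ T N B k τ) (hk : ∀ s, 0 < k s)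
    (hB3 : ∀ s, (B s).2.2 = 0) :
    (∀ s, (τ s) ^ 2 = 1 / 4) ∧ ¬ Biharmonic γ T := by
  have hτ : ∀ s, τ s = -(1/2) := tau_eq hF hk hB3
  constructor
  · intro s; rw [hτ s]; norm_num
  · intro hBi
    have hTN := dotTN_zero hF hk
    have dk := hF.smooth_k.differentiable (by simp)
    have dk' : Differentiable ℝ (deriv k) :=
      (contDiff_infty_iff_deriv.mp hF.smooth_k).2.differentiable (by simp)
    have step1 : covD γ T = fun u => k u • N u := funext hF.fr1
    have step2 : covD γ (covD γ T) = fun u =>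
        (-(k u * k u)) • T u + deriv k u • N u + (k u / 2) • B u := by
      rw [step1]
      have h0 : (fun u => k u • N u) = fun u =>
          (fun _ : ℝ => (0:ℝ)) u • T u + k u • N u + (fun _ : ℝ => (0:ℝ)) u • B u := by
        funext u; simp
      rw [h0]
      funext u
      rw [covD_comb hF _ k _ (differentiable_const 0) dk (differentiable_const 0) u]
      rw [hτ u]
      simp only [deriv_const', Prod.ext_iff, Prod.smul_fst, Prod.smul_snd, smul_eq_mul,
        Prod.fst_add, Prod.snd_add]
      refine ⟨by ring, by ring, by ring⟩
    have hda : ∀ u, deriv (fun v => -(k v * k v)) u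
        = -(deriv k u * k u + k u * deriv k u) := fun u =>
      (((dk u).hasDerivAt.mul (dk u).hasDerivAt).neg).deriv
    have hdc : ∀ u, deriv (fun v => k v / 2) u = deriv k u / 2 := fun u =>
      (((dk u).hasDerivAt).div_const 2).deriv
    have step3 : ∀ s, covD γ (covD γ (covD γ T)) s =
        (-(3 * (k s * deriv k s))) • T s
          + (deriv (deriv k) s - k s ^ 3 - k s / 4) • N s + (deriv k s) • B s := by
      intro s
      rw [step2, covD_comb hF (fun v => -(k v * k v)) (deriv k) (fun v => k v / 2) ((dk.mul dk).neg) dk' (dk.div_const 2) s]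
      rw [hda s, hdc s, hτ s]
      simp only [Prod.ext_iff, Prod.smul_fst, Prod.smul_snd, smul_eq_mul,
        Prod.fst_add, Prod.snd_add]
      refine ⟨by ring, by ring, by ring⟩
    have hRterm : ∀ s, Rfr (γ s) (T s) (covD γ T s) (T s) = (k s / 4) • N s := by
      intro s
      rw [show covD γ T s = k s • N s from hF.fr1 s]
      have h2 : dot (T s) (k s • N s) = 0 := by
        have := hTN s
        simp only [dot, Prod.smul_fst, Prod.smul_snd, smul_eq_mul] at this ⊢
        linear_combination k s * this
      have h3 : (T s).1 * (k s • N s).2.1 - (T s).2.1 * (k s • N s).1 = 0 := by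
        have := cross3_zero hF hB3 s
        simp only [Prod.smul_fst, Prod.smul_snd, smul_eq_mul]
        linear_combination k s * this
      rw [Rfr_TNT (γ s) (T s) (k s • N s) (hF.unit s) h2 h3, smul_smul]
      norm_num
      ring_nf
    have hTBc : ∀ s, (T s).1 * (B s).1 + (T s).2.1 * (B s).2.1 + (T s).2.2 * (B s).2.2 = 0 := by
      intro s; rw [hF.binormal s]; simp only [cross]; ring
    have hNBc : ∀ s, (N s).1 * (B s).1 + (N s).2.1 * (B s).2.1 + (N s).2.2 * (B s).2.2 = 0 := by
      intro s; rw [hF.binormal s]; simp only [cross]; ring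
    have hBBc : ∀ s, (B s).1 * (B s).1 + (B s).2.1 * (B s).2.1 + (B s).2.2 * (B s).2.2 = 1 := by
      intro s; have := dotBB_one hF hk s; simpa [dot] using this
    have hcomp : ∀ s,
        (-(3 * (k s * deriv k s))) * (T s).1
            + (deriv (deriv k) s - k s ^ 3 - k s / 4) * (N s).1 + (deriv k s) * (B s).1
            + (k s / 4) * (N s).1 = 0 ∧
        (-(3 * (k s * deriv k s))) * (T s).2.1
            + (deriv (deriv k) s - k s ^ 3 - k s / 4) * (N s).2.1 + (deriv k s) * (B s).2.1
            + (k s / 4) * (N s).2.1 = 0 ∧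
        (-(3 * (k s * deriv k s))) * (T s).2.2
            + (deriv (deriv k) s - k s ^ 3 - k s / 4) * (N s).2.2 + (deriv k s) * (B s).2.2
            + (k s / 4) * (N s).2.2 = 0 := by
      intro s
      have hb := hBi s
      simp only [bitension] at hb
      rw [step3 s, hRterm s] at hb
      simp only [Prod.ext_iff, Prod.smul_fst, Prod.smul_snd, smul_eq_mul,
        Prod.fst_add, Prod.snd_add, Prod.fst_zero, Prod.snd_zero] at hb
      exact hb
    have hk0 : ∀ s, deriv k s = 0 := by
      intro s
      obtain ⟨E1, E2, E3⟩ := hcomp s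
      linear_combination (B s).1 * E1 + (B s).2.1 * E2 + (B s).2.2 * E3
        + 3 * (k s * deriv k s) * hTBc s
        - (deriv (deriv k) s - k s ^ 3) * hNBc s - deriv k s * hBBc s
    have hdd : deriv (deriv k) 0 = 0 := by
      rw [show deriv k = (fun _ => (0:ℝ)) from funext hk0]
      simp
    have hNN0 : (N 0).1 * (N 0).1 + (N 0).2.1 * (N 0).2.1 + (N 0).2.2 * (N 0).2.2 = 1 := by
      have := hF.normal_unit 0; simpa [dot] using this
    have hTN0 : (T 0).1 * (N 0).1 + (T 0).2.1 * (N 0).2.1 + (T 0).2.2 * (N 0).2.2 = 0 := by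
      have := hTN 0; simpa [dot] using this
    have hcube : k 0 ^ 3 = 0 := by
      obtain ⟨E1, E2, E3⟩ := hcomp 0
      rw [hk0 0, hdd] at E1 E2 E3
      linear_combination (-(N 0).1) * E1 + (-(N 0).2.1) * E2 + (-(N 0).2.2) * E3
        - (k 0) ^ 3 * hNN0
    exact absurd hcube (pow_ne_zero 3 (ne_of_gt (hk 0)))
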